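/- arXiv:1605.01483 — 2 statements merged into one kernel-verified Lean document; each statement's English description precedes it below -/
import Mathlib

section
/- Let H = (V,E,w) be an edge-weighted hypergraph and let f ∈ ℝ^V be a nonzero vector with f_u ≥ 0 for all u ∈ V. Then there exists a nonempty set S ⊆ supp(f) such that φ(S) ≤ (Σ_{e ∈ E} w_e · max_{u,v ∈ e} |f_u − f_v|) / (Σ_{u ∈ V} w_u f_u). -/
open Finset

/-- An edge-weighted hypergraph on a finite vertex set `V`: a finite set of hyperedges,
each a nonempty subset of `V`, with positive weights. -/
structure WHypergraph (V : Type*) [Fintype V] [DecidableEq V] where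
  E : Finset (Finset V)
  w : Finset V → ℝ
  edge_nonempty : ∀ e ∈ E, e.Nonempty
  w_pos : ∀ e ∈ E, 0 < w e

namespace WHypergraph

variable {V : Type*} [Fintype V] [DecidableEq V]

/-- The weight of a vertex: total weight of hyperedges containing it. -/
noncomputable def wv (H : WHypergraph V) (v : V) : ℝ :=
  ∑ e ∈ H.E.filter (fun e => v ∈ e), H.w e

/-- The weight of a set of vertices. -/
noncomputable def wS (H : WHypergraph V) (S : Finset V) : ℝ := ∑ v ∈ S, H.wv v

/-- The boundary of `S`: hyperedges meeting both `S` and its complement. -/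
noncomputable def bdry (H : WHypergraph V) (S : Finset V) : Finset (Finset V) :=
  H.E.filter (fun e => (e ∩ S).Nonempty ∧ (e \ S).Nonempty)

/-- The expansion `φ(S)` of a set of vertices. -/
noncomputable def phi (H : WHypergraph V) (S : Finset V) : ℝ :=
  (∑ e ∈ H.bdry S, H.w e) / H.wS S

/-- `max_{u,v ∈ e} (f u - f v)^2`. -/
noncomputable def edgeDisc (H : WHypergraph V) (f : V → ℝ) (e : Finset V) : ℝ :=
  sSup {x : ℝ | ∃ u ∈ e, ∃ v ∈ e, (f u - f v) ^ 2 = x}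

/-- The discrepancy ratio `D_w(f)`. -/
noncomputable def disc (H : WHypergraph V) (f : V → ℝ) : ℝ :=
  (∑ e ∈ H.E, H.w e * H.edgeDisc f e) / ∑ u : V, H.wv u * f u ^ 2

/-- The weighted inner product `⟨f,g⟩_w`. -/
noncomputable def wip (H : WHypergraph V) (f g : V → ℝ) : ℝ :=
  ∑ u : V, H.wv u * f u * g u

/-- `γ₂`: infimum of the discrepancy ratio over nonzero `f ⊥_w 1`. -/
noncomputable def gamma2 (H : WHypergraph V) : ℝ :=
  sInf {x : ℝ | ∃ f : V → ℝ, f ≠ 0 ∧ H.wip f (fun _ => 1) = 0 ∧ H.disc f = x}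

/-- The hypergraph expansion `φ_H`. -/
noncomputable def phiH (H : WHypergraph V) : ℝ :=
  sInf {x : ℝ | ∃ S : Finset V, S.Nonempty ∧ S ≠ univ ∧
    x = max (H.phi S) (H.phi Sᶜ)}

/-- `ζ_k`: inf over `k`-tuples of nonzero pairwise `w`-orthogonal vectors of the
sup of the discrepancy ratio over nonzero vectors in their span. -/
noncomputable def zeta (H : WHypergraph V) (k : ℕ) : ℝ :=
  sInf {x : ℝ | ∃ f : Fin k → V → ℝ, (∀ i, f i ≠ 0) ∧
    (∀ i j, i ≠ j → H.wip (f i) (f j) = 0) ∧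
    x = sSup {y : ℝ | ∃ h : V → ℝ, h ≠ 0 ∧
      h ∈ Submodule.span ℝ (Set.range f) ∧ H.disc h = y}}

/-- `ξ_k`: inf over `k`-tuples of nonzero pairwise `w`-orthogonal vectors of the
maximum discrepancy ratio among them. -/
noncomputable def xi (H : WHypergraph V) (k : ℕ) : ℝ :=
  sInf {x : ℝ | ∃ f : Fin k → V → ℝ, (∀ i, f i ≠ 0) ∧
    (∀ i j, i ≠ j → H.wip (f i) (f j) = 0) ∧
    x = sSup {y : ℝ | ∃ i, H.disc (f i) = y}}

/-- A sequence of procedural minimizers: `f 0` is a nonzero constant vector, each `f i`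
is nonzero and `w`-orthogonal to the previous ones, and attains the infimum of the
discrepancy ratio over nonzero vectors `w`-orthogonal to the previous ones. -/
def IsProcMin (H : WHypergraph V) {k : ℕ} (f : Fin k → V → ℝ) : Prop :=
  (∀ i, f i ≠ 0) ∧
  (∀ i : Fin k, (i : ℕ) = 0 → ∃ c : ℝ, f i = fun _ => c) ∧
  (∀ i j : Fin k, (j : ℕ) < (i : ℕ) → H.wip (f i) (f j) = 0) ∧
  (∀ i : Fin k, 0 < (i : ℕ) → H.disc (f i) =
    sInf {x : ℝ | ∃ g : V → ℝ, g ≠ 0 ∧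
      (∀ j : Fin k, (j : ℕ) < (i : ℕ) → H.wip g (f j) = 0) ∧ H.disc g = x})

end WHypergraph

/-! Layer cake. If `m` is the least positive value of `f ≥ 0`, then
`f = min f m + (f - m)⁺` with `min f m = m · 1_{supp f}`. Both summands are monotone functions
of `f`, so on every hyperedge they attain their extremes where `f` does and the spread of `f` is
the sum of their spreads. The bottom layer therefore contributes `m · w(∂ supp f)` to the
numerator and `m · w(supp f)` to the denominator, and by the mediant inequality either
`φ(supp f)` or the ratio for `(f - m)⁺`, whose support is strictly smaller, is at most the ratio
for `f`. Induct on the size of the support. -/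

/-- `max_{u,v ∈ e} |f u - f v|`, and `0` for empty `e`. -/
noncomputable def spread {V : Type*} (f : V → ℝ) (e : Finset V) : ℝ :=
  sSup {x : ℝ | ∃ u ∈ e, ∃ v ∈ e, |f u - f v| = x}

section Spread

variable {V : Type*} {f : V → ℝ} {e : Finset V}

theorem spread_nonneg : 0 ≤ spread f e :=
  Real.sSup_nonneg fun _ ⟨_, _, _, _, hx⟩ => hx ▸ abs_nonneg _

theorem abs_sub_le_sup'_sub_inf' {u v : V} (hu : u ∈ e) (hv : v ∈ e) :
    |f u - f v| ≤ e.sup' ⟨u, hu⟩ f - e.inf' ⟨u, hu⟩ f := by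
  have := e.le_sup' f hu; have := e.le_sup' f hv
  have := e.inf'_le f hu; have := e.inf'_le f hv
  exact abs_sub_le_iff.mpr ⟨by linarith, by linarith⟩

theorem spread_eq_sup'_sub_inf' (he : e.Nonempty) :
    spread f e = e.sup' he f - e.inf' he f := by
  refine IsGreatest.csSup_eq ⟨?_, ?_⟩
  · obtain ⟨u, hu, hu_max⟩ := e.exists_mem_eq_sup' he f
    obtain ⟨v, hv, hv_min⟩ := e.exists_mem_eq_inf' he f
    refine ⟨u, hu, v, hv, ?_⟩
    rw [← hu_max, ← hv_min]
    exact abs_of_nonneg (sub_nonneg.mpr ((e.inf'_le f hu).trans (e.le_sup' f hu)))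
  · rintro _ ⟨u, hu, v, hv, rfl⟩
    exact abs_sub_le_sup'_sub_inf' hu hv

theorem le_spread {u v : V} (hu : u ∈ e) (hv : v ∈ e) : |f u - f v| ≤ spread f e :=
  spread_eq_sup'_sub_inf' ⟨u, hu⟩ ▸ abs_sub_le_sup'_sub_inf' hu hv

theorem spread_comp_of_monotone (he : e.Nonempty) {φ : ℝ → ℝ} (hφ : Monotone φ) :
    spread (φ ∘ f) e = φ (e.sup' he f) - φ (e.inf' he f) := by
  rw [spread_eq_sup'_sub_inf' he, e.apply_sup'_eq_sup'_comp he φ fun _ _ => hφ.map_max,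
    e.apply_inf'_eq_inf'_comp he φ fun _ _ => hφ.map_min]

theorem spread_eq_spread_min_add_spread_sub (m : ℝ) :
    spread f e = spread (fun u => min (f u) m) e + spread (fun u => max (f u - m) 0) e := by
  rcases e.eq_empty_or_nonempty with rfl | he
  · simp [spread]
  have hlow := spread_comp_of_monotone (f := f) he (φ := fun x => min x m)
    fun _ _ h => min_le_min_right m h
  have hhigh := spread_comp_of_monotone (f := f) he (φ := fun x => max (x - m) 0)
    fun _ _ h => max_le_max_right 0 (sub_le_sub_right h m)
  simp only [Function.comp_def] at hlow hhigh
  rw [hlow, hhigh, spread_eq_sup'_sub_inf' he]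
  have hsplit : ∀ x : ℝ, min x m + max (x - m) 0 = x := fun x => by
    rcases le_total x m with h | h
    · rw [min_eq_left h, max_eq_right (by linarith)]; ring
    · rw [min_eq_right h, max_eq_left (by linarith)]; ring
  linarith [hsplit (e.sup' he f), hsplit (e.inf' he f)]

end Spread

theorem card_pos_max_sub_lt {V : Type*} [Fintype V] {f : V → ℝ} {m : ℝ} (hm : 0 ≤ m)
    {u₀ : V} (hu₀ : 0 < f u₀) (hu₀m : f u₀ ≤ m) :
    #(univ.filter fun u => 0 < max (f u - m) 0) < #(univ.filter fun u => 0 < f u) := by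
  refine card_lt_card ((ssubset_iff_of_subset fun u hu => ?_).mpr ⟨u₀, ?_, ?_⟩)
  · simp only [mem_filter, mem_univ, true_and, lt_max_iff, lt_irrefl, or_false, sub_pos] at hu ⊢
    exact hm.trans_lt hu
  · exact mem_filter.mpr ⟨mem_univ u₀, hu₀⟩
  · simp [hu₀m]

theorem div_le_or_div_le_of_add_le {a b c d N : ℝ} (ha : 0 ≤ a) (hb : 0 ≤ b) (hc : 0 ≤ c)
    (hd : 0 ≤ d) (hN : a + c ≤ N) : a / b ≤ N / (b + d) ∨ c / d ≤ N / (b + d) := by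
  by_contra! h
  obtain ⟨hab, hcd⟩ := h
  have hNbd : 0 ≤ N / (b + d) := div_nonneg (by linarith) (by linarith)
  have hb' : 0 < b := lt_of_le_of_ne hb fun h =>
    (hNbd.trans_lt hab).ne' (by rw [← h, div_zero])
  have hd' : 0 < d := lt_of_le_of_ne hd fun h =>
    (hNbd.trans_lt hcd).ne' (by rw [← h, div_zero])
  rw [div_lt_div_iff₀ (by linarith) hb'] at hab
  rw [div_lt_div_iff₀ (by linarith) hd'] at hcd
  nlinarith

namespace WHypergraph

variable {V : Type*} [Fintype V] [DecidableEq V] (H : WHypergraph V)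

noncomputable def spreadSum (f : V → ℝ) : ℝ := ∑ e ∈ H.E, H.w e * spread f e

noncomputable def weightedSum (f : V → ℝ) : ℝ := ∑ u : V, H.wv u * f u

theorem wv_nonneg (v : V) : 0 ≤ H.wv v :=
  sum_nonneg fun e he => (H.w_pos e (mem_filter.mp he).1).le

theorem wS_nonneg (S : Finset V) : 0 ≤ H.wS S := sum_nonneg fun v _ => H.wv_nonneg v

theorem spreadSum_nonneg (f : V → ℝ) : 0 ≤ H.spreadSum f :=
  sum_nonneg fun e he => mul_nonneg (H.w_pos e he).le spread_nonneg

theorem weightedSum_nonneg {f : V → ℝ} (hf : ∀ u, 0 ≤ f u) : 0 ≤ H.weightedSum f :=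
  sum_nonneg fun u _ => mul_nonneg (H.wv_nonneg u) (hf u)

section Peel

variable {f : V → ℝ} {m : ℝ} (hf : ∀ u, 0 ≤ f u) (hm0 : 0 ≤ m)
  (hm : ∀ u, 0 < f u → m ≤ f u)
include hf hm0 hm

theorem weightedSum_eq_peel :
    H.weightedSum f =
      m * H.wS (univ.filter fun u => 0 < f u) + H.weightedSum fun u => max (f u - m) 0 := by
  have hlayer : ∀ u, f u = (if 0 < f u then m else 0) + max (f u - m) 0 := fun u => by
    rcases (hf u).lt_or_eq with h | h
    · rw [if_pos h, max_eq_left (by linarith [hm u h])]; ring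
    · rw [← h, if_neg (lt_irrefl 0), max_eq_right (by linarith)]; ring
  calc H.weightedSum f
      = ∑ u, H.wv u * ((if 0 < f u then m else 0) + max (f u - m) 0) :=
        sum_congr rfl fun u _ => by rw [← hlayer u]
    _ = _ := by
        simp only [mul_add, sum_add_distrib, wS, mul_sum, sum_filter, weightedSum]
        congr 1
        exact sum_congr rfl fun u _ => by split_ifs <;> ring

theorem spreadSum_peel_le :
    m * (∑ e ∈ H.bdry (univ.filter fun u => 0 < f u), H.w e) +
      H.spreadSum (fun u => max (f u - m) 0) ≤ H.spreadSum f := by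
  set S := univ.filter fun u => 0 < f u
  have hedge : ∀ e, (if e ∈ H.bdry S then m else 0) + spread (fun u => max (f u - m) 0) e ≤
      spread f e := by
    intro e
    rw [spread_eq_spread_min_add_spread_sub m (f := f)]
    gcongr
    split_ifs with hb
    · obtain ⟨-, ⟨u, hu⟩, ⟨v, hv⟩⟩ := mem_filter.mp hb
      rw [mem_inter, mem_filter] at hu
      rw [mem_sdiff, mem_filter] at hv
      have hfv : f v = 0 := (hf v).antisymm' (not_lt.mp fun h => hv.2 ⟨mem_univ v, h⟩)
      calc m = |min (f u) m - min (f v) m| := by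
            rw [min_eq_right (hm u hu.2.2), hfv, min_eq_left hm0, sub_zero, abs_of_nonneg hm0]
        _ ≤ _ := le_spread (f := fun u => min (f u) m) hu.1 hv.1
    · exact spread_nonneg
  calc m * (∑ e ∈ H.bdry S, H.w e) + H.spreadSum (fun u => max (f u - m) 0)
      = ∑ e ∈ H.E, H.w e * ((if e ∈ H.bdry S then m else 0) +
          spread (fun u => max (f u - m) 0) e) := by
        rw [bdry, sum_filter, mul_sum, spreadSum, ← sum_add_distrib]
        refine sum_congr rfl fun e he => ?_
        simp only [mem_filter, he, true_and]
        split_ifs <;> ring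
    _ ≤ H.spreadSum f :=
        sum_le_sum fun e he => mul_le_mul_of_nonneg_left (hedge e) (H.w_pos e he).le

end Peel

theorem exists_phi_le_spreadSum_div_weightedSum {f : V → ℝ} (hf0 : f ≠ 0)
    (hf : ∀ u, 0 ≤ f u) : ∃ S : Finset V, S.Nonempty ∧ (∀ u ∈ S, f u ≠ 0) ∧
      H.phi S ≤ H.spreadSum f / H.weightedSum f := by
  induction hn : #(univ.filter fun u => 0 < f u) using Nat.strong_induction_on
    generalizing f with
  | _ n ih =>
  set S := univ.filter fun u => 0 < f u
  have hS : S.Nonempty := by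
    obtain ⟨u, hu⟩ := Function.ne_iff.mp hf0
    exact ⟨u, mem_filter.mpr ⟨mem_univ u, (hf u).lt_of_ne' hu⟩⟩
  have hS_supp : ∀ u ∈ S, f u ≠ 0 := fun u hu => (mem_filter.mp hu).2.ne'
  obtain ⟨u₀, hu₀, hmin⟩ := S.exists_min_image f hS
  set m := f u₀
  have hm0 : 0 < m := (mem_filter.mp hu₀).2
  have hm : ∀ u, 0 < f u → m ≤ f u := fun u hu => hmin u (mem_filter.mpr ⟨mem_univ u, hu⟩)
  set g : V → ℝ := fun u => max (f u - m) 0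
  have hg : ∀ u, 0 ≤ g u := fun u => le_max_right _ _
  have hD := H.weightedSum_eq_peel hf hm0.le hm
  have hN := H.spreadSum_peel_le hf hm0.le hm
  have hphiS : H.phi S = m * (∑ e ∈ H.bdry S, H.w e) / (m * H.wS S) :=
    (mul_div_mul_left _ _ hm0.ne').symm
  by_cases hg0 : g = 0
  · refine ⟨S, hS, hS_supp, ?_⟩
    have hg_sum : H.weightedSum g = 0 := by simp [hg0, weightedSum]
    rw [hphiS, hD, hg_sum, add_zero]
    exact div_le_div_of_nonneg_right (by linarith [H.spreadSum_nonneg g])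
      (mul_nonneg hm0.le (H.wS_nonneg S))
  obtain ⟨T, hT, hT_supp, hT_phi⟩ :=
    ih _ (hn ▸ card_pos_max_sub_lt hm0.le hm0 le_rfl) hg0 hg rfl
  have hbdry_nonneg : 0 ≤ ∑ e ∈ H.bdry S, H.w e :=
    sum_nonneg fun e he => (H.w_pos e (mem_filter.mp he).1).le
  rcases div_le_or_div_le_of_add_le (mul_nonneg hm0.le hbdry_nonneg)
      (mul_nonneg hm0.le (H.wS_nonneg S)) (H.spreadSum_nonneg g) (H.weightedSum_nonneg hg)
      hN with h | h
  · exact ⟨S, hS, hS_supp, hphiS ▸ hD ▸ h⟩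
  · refine ⟨T, hT, fun u hu hfu => hT_supp u hu ?_, hT_phi.trans (hD ▸ h)⟩
    simp [g, hfu, hm0.le]

end WHypergraph

theorem hypergraph_line_embedding_general {V : Type*} [Fintype V] [DecidableEq V]
    (H : WHypergraph V)
    (f : V → ℝ) (hf : f ≠ 0) (hfpos : ∀ u : V, 0 ≤ f u) :
    ∃ S : Finset V, S.Nonempty ∧ (∀ u ∈ S, f u ≠ 0) ∧
      H.phi S ≤
        (∑ e ∈ H.E, H.w e * sSup {x : ℝ | ∃ u ∈ e, ∃ v ∈ e, |f u - f v| = x}) /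
          ∑ u : V, H.wv u * f u :=
  H.exists_phi_le_spreadSum_div_weightedSum hf hfpos

/-- Line embedding: for a nonzero nonnegative `f` there is a nonempty `S ⊆ supp(f)` with
`φ(S) ≤ (Σ_e w_e max_{u,v ∈ e} |f_u − f_v|) / (Σ_u w_u f_u)`. -/
theorem hypergraph_line_embedding {V : Type*} [Fintype V] [DecidableEq V]
    (H : WHypergraph V) (hw : ∀ v : V, 0 < H.wv v)
    (f : V → ℝ) (hf : f ≠ 0) (hfpos : ∀ u : V, 0 ≤ f u) :
    ∃ S : Finset V, S.Nonempty ∧ (∀ u ∈ S, f u ≠ 0) ∧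
      H.phi S ≤
        (∑ e ∈ H.E, H.w e * sSup {x : ℝ | ∃ u ∈ e, ∃ v ∈ e, |f u - f v| = x}) /
          ∑ u : V, H.wv u * f u :=
  hypergraph_line_embedding_general H f hf hfpos
end

section
/- Let H = (V,E,w) be an edge-weighted hypergraph, let 2 ≤ k ≤ |V|, let f_1, …, f_{k−1} be a sequence of procedural minimizers, and let γ_k := inf{ D_w(f) : f ≠ 0, f ⊥_w f_1, …, f_{k−1} }. Then γ_k ≤ ζ_k. -/
open Finset

/-- An edge-weighted hypergraph on a finite vertex set `V`: a finite set of hyperedges,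
each a nonempty subset of `V`, with positive weights. -/
structure EWHypergraph (V : Type*) [Fintype V] [DecidableEq V] where
  E : Finset (Finset V)
  w : Finset V → ℝ
  edge_nonempty : ∀ e ∈ E, e.Nonempty
  w_pos : ∀ e ∈ E, 0 < w e

namespace EWHypergraph

variable {V : Type*} [Fintype V] [DecidableEq V]

/-- The weight of a vertex: total weight of hyperedges containing it. -/
noncomputable def wv (H : EWHypergraph V) (v : V) : ℝ :=
  ∑ e ∈ H.E.filter (fun e => v ∈ e), H.w e

/-- The weight of a set of vertices. -/
noncomputable def wS (H : EWHypergraph V) (S : Finset V) : ℝ := ∑ v ∈ S, H.wv v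

/-- The boundary of `S`: hyperedges meeting both `S` and its complement. -/
noncomputable def bdry (H : EWHypergraph V) (S : Finset V) : Finset (Finset V) :=
  H.E.filter (fun e => (e ∩ S).Nonempty ∧ (e \ S).Nonempty)

/-- The expansion `φ(S)` of a set of vertices. -/
noncomputable def phi (H : EWHypergraph V) (S : Finset V) : ℝ :=
  (∑ e ∈ H.bdry S, H.w e) / H.wS S

/-- `max_{u,v ∈ e} (f u - f v)^2`. -/
noncomputable def edgeDisc (H : EWHypergraph V) (f : V → ℝ) (e : Finset V) : ℝ :=
  sSup {x : ℝ | ∃ u ∈ e, ∃ v ∈ e, (f u - f v) ^ 2 = x}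

/-- The discrepancy ratio `D_w(f)`. -/
noncomputable def disc (H : EWHypergraph V) (f : V → ℝ) : ℝ :=
  (∑ e ∈ H.E, H.w e * H.edgeDisc f e) / ∑ u : V, H.wv u * f u ^ 2

/-- The weighted inner product `⟨f,g⟩_w`. -/
noncomputable def wip (H : EWHypergraph V) (f g : V → ℝ) : ℝ :=
  ∑ u : V, H.wv u * f u * g u

/-- `γ₂`: infimum of the discrepancy ratio over nonzero `f ⊥_w 1`. -/
noncomputable def gamma2 (H : EWHypergraph V) : ℝ :=
  sInf {x : ℝ | ∃ f : V → ℝ, f ≠ 0 ∧ H.wip f (fun _ => 1) = 0 ∧ H.disc f = x}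

/-- The hypergraph expansion `φ_H`. -/
noncomputable def phiH (H : EWHypergraph V) : ℝ :=
  sInf {x : ℝ | ∃ S : Finset V, S.Nonempty ∧ S ≠ univ ∧
    x = max (H.phi S) (H.phi Sᶜ)}

/-- `ζ_k`: inf over `k`-tuples of nonzero pairwise `w`-orthogonal vectors of the
sup of the discrepancy ratio over nonzero vectors in their span. -/
noncomputable def zeta (H : EWHypergraph V) (k : ℕ) : ℝ :=
  sInf {x : ℝ | ∃ f : Fin k → V → ℝ, (∀ i, f i ≠ 0) ∧
    (∀ i j, i ≠ j → H.wip (f i) (f j) = 0) ∧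
    x = sSup {y : ℝ | ∃ h : V → ℝ, h ≠ 0 ∧
      h ∈ Submodule.span ℝ (Set.range f) ∧ H.disc h = y}}

/-- `ξ_k`: inf over `k`-tuples of nonzero pairwise `w`-orthogonal vectors of the
maximum discrepancy ratio among them. -/
noncomputable def xi (H : EWHypergraph V) (k : ℕ) : ℝ :=
  sInf {x : ℝ | ∃ f : Fin k → V → ℝ, (∀ i, f i ≠ 0) ∧
    (∀ i j, i ≠ j → H.wip (f i) (f j) = 0) ∧
    x = sSup {y : ℝ | ∃ i, H.disc (f i) = y}}

/-- A sequence of procedural minimizers: `f 0` is a nonzero constant vector, each `f i`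
is nonzero and `w`-orthogonal to the previous ones, and attains the infimum of the
discrepancy ratio over nonzero vectors `w`-orthogonal to the previous ones. -/
def IsProcMin (H : EWHypergraph V) {k : ℕ} (f : Fin k → V → ℝ) : Prop :=
  (∀ i, f i ≠ 0) ∧
  (∀ i : Fin k, (i : ℕ) = 0 → ∃ c : ℝ, f i = fun _ => c) ∧
  (∀ i j : Fin k, (j : ℕ) < (i : ℕ) → H.wip (f i) (f j) = 0) ∧
  (∀ i : Fin k, 0 < (i : ℕ) → H.disc (f i) =
    sInf {x : ℝ | ∃ g : V → ℝ, g ≠ 0 ∧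
      (∀ j : Fin k, (j : ℕ) < (i : ℕ) → H.wip g (f j) = 0) ∧ H.disc g = x})

end EWHypergraph

/-!
Any `k` pairwise `w`-orthogonal nonzero vectors are linearly independent, since every vertex
weight is positive, so their span is `k`-dimensional and contains a nonzero `h` that is
`w`-orthogonal to the `k - 1` vectors `f_j`. Hence `γ_k ≤ D_w(h)`, and `D_w(h)` is at most the
supremum over the span. All sets involved are bounded because `0 ≤ D_w ≤ 4 |E|`.
-/

namespace EWHypergraph

lemma edgeDisc_bddAbove {V : Type*} (f : V → ℝ) (e : Finset V) :
    BddAbove {x : ℝ | ∃ u ∈ e, ∃ v ∈ e, (f u - f v) ^ 2 = x} := by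
  refine ((Set.finite_range fun p : e × e => (f p.1 - f p.2) ^ 2).subset ?_).bddAbove
  rintro x ⟨u, hu, v, hv, rfl⟩
  exact ⟨(⟨u, hu⟩, ⟨v, hv⟩), rfl⟩

variable {V : Type*} [Fintype V] [DecidableEq V] (H : EWHypergraph V)

lemma w_le_wv {e : Finset V} (he : e ∈ H.E) {v : V} (hv : v ∈ e) : H.w e ≤ H.wv v :=
  single_le_sum (fun e he => (H.w_pos e (mem_filter.mp he).1).le) (mem_filter.mpr ⟨he, hv⟩)

lemma wv_nonneg (v : V) : 0 ≤ H.wv v :=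
  sum_nonneg fun e he => (H.w_pos e (mem_filter.mp he).1).le

lemma edgeDisc_nonneg (f : V → ℝ) {e : Finset V} (he : e.Nonempty) : 0 ≤ H.edgeDisc f e := by
  obtain ⟨u, hu⟩ := he
  exact le_csSup (edgeDisc_bddAbove f e) ⟨u, hu, u, hu, by ring⟩

/-- Each endpoint of `e` carries at least the weight of `e`, and `(a - b)² ≤ 2a² + 2b²`. -/
lemma w_mul_edgeDisc_le (f : V → ℝ) {e : Finset V} (he : e ∈ H.E) :
    H.w e * H.edgeDisc f e ≤ 4 * ∑ u, H.wv u * f u ^ 2 := by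
  obtain ⟨u₀, hu₀⟩ := H.edge_nonempty e he
  have hwe := H.w_pos e he
  rw [← le_div_iff₀' hwe]
  refine csSup_le ⟨_, u₀, hu₀, u₀, hu₀, rfl⟩ ?_
  rintro _ ⟨u, hu, v, hv, rfl⟩
  have hterm : ∀ x ∈ e, H.w e * f x ^ 2 ≤ ∑ u, H.wv u * f u ^ 2 := fun x hx =>
    (mul_le_mul_of_nonneg_right (H.w_le_wv he hx) (sq_nonneg _)).trans
      (single_le_sum (fun u _ => mul_nonneg (H.wv_nonneg u) (sq_nonneg (f u))) (mem_univ x))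
  rw [le_div_iff₀' hwe]
  nlinarith [hterm u hu, hterm v hv, sq_nonneg (f u + f v)]

lemma disc_nonneg (f : V → ℝ) : 0 ≤ H.disc f :=
  div_nonneg
    (sum_nonneg fun e he =>
      mul_nonneg (H.w_pos e he).le (H.edgeDisc_nonneg f (H.edge_nonempty e he)))
    (sum_nonneg fun u _ => mul_nonneg (H.wv_nonneg u) (sq_nonneg (f u)))

lemma disc_le_four_mul_card (f : V → ℝ) : H.disc f ≤ 4 * #H.E := by
  refine div_le_of_le_mul₀ (sum_nonneg fun u _ => mul_nonneg (H.wv_nonneg u) (sq_nonneg (f u)))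
    (by positivity) ?_
  calc ∑ e ∈ H.E, H.w e * H.edgeDisc f e
      ≤ ∑ _e ∈ H.E, 4 * ∑ u, H.wv u * f u ^ 2 :=
        sum_le_sum fun e he => H.w_mul_edgeDisc_le f he
    _ = 4 * #H.E * ∑ u, H.wv u * f u ^ 2 := by rw [sum_const, nsmul_eq_mul]; ring

noncomputable def wipForm : LinearMap.BilinForm ℝ (V → ℝ) :=
  LinearMap.mk₂ ℝ H.wip
    (fun f f' g => by
      simp only [wip, Pi.add_apply, ← sum_add_distrib]; exact sum_congr rfl fun _ _ => by ring)
    (fun c f g => by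
      simp only [wip, Pi.smul_apply, smul_eq_mul, mul_sum]; exact sum_congr rfl fun _ _ => by ring)
    (fun f g g' => by
      simp only [wip, Pi.add_apply, ← sum_add_distrib]; exact sum_congr rfl fun _ _ => by ring)
    (fun c f g => by
      simp only [wip, Pi.smul_apply, smul_eq_mul, mul_sum]; exact sum_congr rfl fun _ _ => by ring)

lemma wip_self_pos {H : EWHypergraph V} (hw : ∀ v, 0 < H.wv v) {f : V → ℝ} (hf : f ≠ 0) :
    0 < H.wip f f := by
  obtain ⟨u, hu⟩ := Function.ne_iff.mp hf
  refine sum_pos' (fun v _ => ?_) ⟨u, mem_univ u, ?_⟩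
  · rw [mul_assoc]; exact mul_nonneg (hw v).le (mul_self_nonneg _)
  · rw [mul_assoc]; exact mul_pos (hw u) (mul_self_pos.mpr hu)

lemma linearIndependent_of_wip_eq_zero {H : EWHypergraph V} (hw : ∀ v, 0 < H.wv v)
    {ι : Type*} {g : ι → V → ℝ} (hg : ∀ i, g i ≠ 0)
    (horth : ∀ i j, i ≠ j → H.wip (g i) (g j) = 0) :
    LinearIndependent ℝ g :=
  LinearMap.BilinForm.linearIndependent_of_iIsOrtho (B := H.wipForm) horth
    fun i => (wip_self_pos hw (hg i)).ne'

lemma wip_single_single {a b : V} (hab : a ≠ b) :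
    H.wip (Pi.single a 1) (Pi.single b 1) = 0 :=
  sum_eq_zero fun u _ => by
    by_cases hu : u = a
    · subst hu; simp [hab]
    · simp [Pi.single_apply, hu]

lemma exists_wip_orthogonal_family {k : ℕ} (hk : k ≤ Fintype.card V) :
    ∃ g : Fin k → V → ℝ, (∀ i, g i ≠ 0) ∧
      ∀ i j, i ≠ j → H.wip (g i) (g j) = 0 := by
  obtain ⟨ι⟩ : Nonempty (Fin k ↪ V) :=
    Function.Embedding.nonempty_iff_card_le.mpr (by simpa using hk)
  exact ⟨fun i => Pi.single (ι i) 1, fun i => by simp,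
    fun i j hij => H.wip_single_single (ι.injective.ne hij)⟩

lemma exists_mem_span_wip_eq_zero {H : EWHypergraph V} (hw : ∀ v, 0 < H.wv v) {m n : ℕ}
    (hmn : m < n) {g : Fin n → V → ℝ} (hg : ∀ i, g i ≠ 0)
    (horth : ∀ i j, i ≠ j → H.wip (g i) (g j) = 0) (f : Fin m → V → ℝ) :
    ∃ h ≠ 0, h ∈ Submodule.span ℝ (Set.range g) ∧ ∀ j, H.wip h (f j) = 0 := by
  set W := Submodule.span ℝ (Set.range g)
  let T : W →ₗ[ℝ] Fin m → ℝ :=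
    (LinearMap.pi fun j => H.wipForm.flip (f j)) ∘ₗ W.subtype
  have hdim : Module.finrank ℝ (Fin m → ℝ) < Module.finrank ℝ W := by
    rw [finrank_span_eq_card (linearIndependent_of_wip_eq_zero hw hg horth)]
    simpa using hmn
  obtain ⟨⟨h, hW⟩, hker, hne⟩ :=
    (Submodule.ne_bot_iff _).mp (LinearMap.ker_ne_bot_of_finrank_lt hdim)
  exact ⟨h, fun h0 => hne (Subtype.ext h0), hW,
    congr_fun (LinearMap.mem_ker.mp hker : T ⟨h, hW⟩ = 0)⟩

end EWHypergraph

open EWHypergraph in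
theorem procedural_gamma_le_zeta_general {V : Type*} [Fintype V] [DecidableEq V]
    (H : EWHypergraph V) (hw : ∀ v : V, 0 < H.wv v)
    (k : ℕ) (hk1 : 2 ≤ k) (hk2 : k ≤ Fintype.card V)
    (f : Fin (k - 1) → V → ℝ) :
    sInf {x : ℝ | ∃ g : V → ℝ, g ≠ 0 ∧
        (∀ j : Fin (k - 1), H.wip g (f j) = 0) ∧ H.disc g = x} ≤
      H.zeta k := by
  obtain ⟨g₀, hg₀, horth₀⟩ := H.exists_wip_orthogonal_family hk2
  rw [zeta]
  refine le_csInf ⟨_, g₀, hg₀, horth₀, rfl⟩ ?_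
  rintro _ ⟨g, hg, horth, rfl⟩
  obtain ⟨h, hh, hspan, hperp⟩ := exists_mem_span_wip_eq_zero hw (by omega) hg horth f
  refine le_trans (b := H.disc h) (csInf_le ?_ ⟨h, hh, hperp, rfl⟩)
    (le_csSup ?_ ⟨h, hh, hspan, rfl⟩)
  · exact ⟨0, by rintro _ ⟨g', -, -, rfl⟩; exact H.disc_nonneg g'⟩
  · exact ⟨4 * #H.E, by rintro _ ⟨h', -, -, rfl⟩; exact H.disc_le_four_mul_card h'⟩

/-- For procedural minimizers `f_1, …, f_{k-1}` and
`γ_k := inf { D_w(g) : g ≠ 0, g ⊥_w f_1, …, f_{k−1} }`, we have `γ_k ≤ ζ_k`. -/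
theorem procedural_gamma_le_zeta {V : Type*} [Fintype V] [DecidableEq V]
    (H : EWHypergraph V) (hw : ∀ v : V, 0 < H.wv v)
    (k : ℕ) (hk1 : 2 ≤ k) (hk2 : k ≤ Fintype.card V)
    (f : Fin (k - 1) → V → ℝ) (hf : H.IsProcMin f) :
    sInf {x : ℝ | ∃ g : V → ℝ, g ≠ 0 ∧
        (∀ j : Fin (k - 1), H.wip g (f j) = 0) ∧ H.disc g = x} ≤
      H.zeta k :=
  procedural_gamma_le_zeta_general H hw k hk1 hk2 f
end
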